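/- For each fixed t > 0, the map x ↦ φ_t(x) on [0,∞) is concave; indeed its second derivative satisfies (ϖ²/ϖ₋)·e^{−λt} ≤ (1/2)·∂²φ_t(x)/∂x² < 0 for all x ≥ 0, where ϖ = 1 − ϖ₊/ϖ₋. -/

import Mathlib

/-!
Writing `E = e^{-λt} ∈ (0, 1)`, the denominator of `φ_t` is the affine function
`(1 - E) x + ϖ₊ E - ϖ₋`, so `φ_t(x) = α - β / ((1 - E) x + ϖ₊ E - ϖ₋)` for constants `α` and
`β = (ϖ₊ - ϖ₋)² E / (1 - E) > 0`. Hence `½ φ_t'' = -(ϖ₊ - ϖ₋)² E (1 - E) / ((1 - E) x + ϖ₊ E - ϖ₋)³`,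
which is negative on `[0, ∞)` since `ϖ₋ < 0 < ϖ₊`; bounding the denominator below by `-ϖ₋` and
`1 - E` above by `1` gives `½ φ_t'' ≥ (ϖ₊ - ϖ₋)² E / ϖ₋³ = ϖ² E / ϖ₋`.
-/

noncomputable def lam (A R S : ℝ) : ℝ := 2 * Real.sqrt (A ^ 2 + R * S)

noncomputable def wplus (A R S : ℝ) : ℝ := (A + lam A R S / 2) / S

noncomputable def wminus (A R S : ℝ) : ℝ := (A - lam A R S / 2) / S

/-- The closed-form Riccati semigroup `φ_t(x)`. -/
noncomputable def phi (A R S t x : ℝ) : ℝ :=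
  wplus A R S +
    (x - wplus A R S) * ((wplus A R S - wminus A R S) * Real.exp (-(lam A R S) * t)) /
      ((wplus A R S - wminus A R S) * Real.exp (-(lam A R S) * t) +
        (x - wminus A R S) * (1 - Real.exp (-(lam A R S) * t)))

/-- `ϖ = 1 - ϖ₊/ϖ₋`. -/
noncomputable def vpi (A R S : ℝ) : ℝ := 1 - wplus A R S / wminus A R S

open Filter Topology Set

section ConstSubDivAffine

variable {f : ℝ → ℝ} {α β k d x : ℝ}

lemma hasDerivAt_affine : HasDerivAt (fun y : ℝ => k * y + d) k x := by
  simpa using ((hasDerivAt_id x).const_mul k).add_const d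

lemma eventually_affine_ne_zero (hx : k * x + d ≠ 0) : ∀ᶠ y in 𝓝 x, k * y + d ≠ 0 :=
  (show ContinuousAt (fun y : ℝ => k * y + d) x by fun_prop).eventually_ne hx

lemma hasDerivAt_const_sub_div_affine (hx : k * x + d ≠ 0) :
    HasDerivAt (fun y => α - β / (k * y + d)) (β * k / (k * x + d) ^ 2) x :=
  (((hasDerivAt_const x β).div hasDerivAt_affine hx).const_sub α).congr_deriv
    (by field_simp; ring)

lemma hasDerivAt_div_affine_sq (hx : k * x + d ≠ 0) :
    HasDerivAt (fun y => β * k / (k * y + d) ^ 2) (-2 * β * k ^ 2 / (k * x + d) ^ 3) x :=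
  ((hasDerivAt_const x (β * k)).div (hasDerivAt_affine.pow 2) (pow_ne_zero 2 hx)).congr_deriv
    (by simp only [Pi.pow_apply]; field_simp; ring)

lemma hasDerivAt_of_eq_const_sub_div_affine
    (hf : ∀ y, k * y + d ≠ 0 → f y = α - β / (k * y + d)) (hx : k * x + d ≠ 0) :
    HasDerivAt f (β * k / (k * x + d) ^ 2) x :=
  (hasDerivAt_const_sub_div_affine hx).congr_of_eventuallyEq
    ((eventually_affine_ne_zero hx).mono hf)

lemma iteratedDeriv_two_of_eq_const_sub_div_affine
    (hf : ∀ y, k * y + d ≠ 0 → f y = α - β / (k * y + d)) (hx : k * x + d ≠ 0) :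
    iteratedDeriv 2 f x = -2 * β * k ^ 2 / (k * x + d) ^ 3 := by
  have hderiv : deriv f =ᶠ[𝓝 x] fun y => β * k / (k * y + d) ^ 2 :=
    (eventually_affine_ne_zero hx).mono fun y hy =>
      (hasDerivAt_of_eq_const_sub_div_affine hf hy).deriv
  rw [iteratedDeriv_succ, iteratedDeriv_one, hderiv.deriv_eq, (hasDerivAt_div_affine_sq hx).deriv]

lemma concaveOn_of_eq_const_sub_div_affine {D : Set ℝ} (hD : Convex ℝ D)
    (hf : ∀ y, k * y + d ≠ 0 → f y = α - β / (k * y + d)) (hβ : 0 ≤ β)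
    (hpos : ∀ y ∈ D, 0 < k * y + d) : ConcaveOn ℝ D f := by
  have hpos' : ∀ y ∈ interior D, 0 < k * y + d := fun y hy => hpos y (interior_subset hy)
  refine concaveOn_of_hasDerivWithinAt2_nonpos hD
    (fun y hy => (hasDerivAt_of_eq_const_sub_div_affine hf (hpos y hy).ne').continuousAt
      |>.continuousWithinAt)
    (fun y hy => (hasDerivAt_of_eq_const_sub_div_affine hf (hpos' y hy).ne').hasDerivWithinAt)
    (fun y hy => (hasDerivAt_div_affine_sq (β := β) (hpos' y hy).ne').hasDerivWithinAt)
    fun y hy => ?_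
  have := hpos' y hy
  show -2 * β * k ^ 2 / (k * y + d) ^ 3 ≤ 0
  rw [neg_mul, neg_mul, neg_div]
  exact neg_nonpos.mpr (by positivity)

end ConstSubDivAffine

lemma mobius_eq_const_sub_div {p m E y : ℝ} (hE : E ≠ 1)
    (hy : (1 - E) * y + (p * E - m) ≠ 0) :
    p + (y - p) * ((p - m) * E) / ((p - m) * E + (y - m) * (1 - E)) =
      (p + (p - m) * E / (1 - E)) - ((p - m) ^ 2 * E / (1 - E)) / ((1 - E) * y + (p * E - m)) := by
  have hk : (1 : ℝ) - E ≠ 0 := sub_ne_zero.mpr hE.symm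
  rw [show (p - m) * E + (y - m) * (1 - E) = (1 - E) * y + (p * E - m) by ring,
    eq_sub_iff_add_eq, add_assoc, add_right_inj, div_div, div_add_div _ _ hy (mul_ne_zero hk hy),
    div_eq_div_iff (mul_ne_zero hy (mul_ne_zero hk hy)) hk]
  ring

lemma sq_one_sub_div_div_mul_le {p m E x : ℝ} (hp : 0 < p) (hm : m < 0) (hE0 : 0 < E)
    (hE1 : E < 1) (hx : 0 ≤ x) :
    (1 - p / m) ^ 2 / m * E ≤ -((p - m) ^ 2 * E * (1 - E) / ((1 - E) * x + (p * E - m)) ^ 3) := by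
  have hm' : 0 < -m := neg_pos.mpr hm
  have hm3 : 0 < (-m) ^ 3 := by positivity
  have hD : -m ≤ (1 - E) * x + (p * E - m) := by nlinarith [mul_nonneg (sub_nonneg.mpr hE1.le) hx]
  have hden : (-m) ^ 3 ≤ ((1 - E) * x + (p * E - m)) ^ 3 := pow_le_pow_left₀ hm'.le hD 3
  rw [show (1 - p / m) ^ 2 / m * E = -((p - m) ^ 2 * E / (-m) ^ 3) by field_simp [hm.ne]; ring,
    neg_le_neg_iff, div_le_div_iff₀ (hm3.trans_le hden) hm3]
  have hk : (1 - E) * (-m) ^ 3 ≤ ((1 - E) * x + (p * E - m)) ^ 3 := by nlinarith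
  nlinarith [mul_le_mul_of_nonneg_left hk (by positivity : (0 : ℝ) ≤ (p - m) ^ 2 * E)]

section Riccati

variable {A R S : ℝ}

lemma abs_lt_half_lam (hR : 0 < R) (hS : 0 < S) : |A| < lam A R S / 2 := by
  rw [← Real.sqrt_sq_eq_abs, lam, mul_div_cancel_left₀ _ two_ne_zero]
  exact Real.sqrt_lt_sqrt (sq_nonneg A) (by nlinarith)

lemma wplus_pos (hR : 0 < R) (hS : 0 < S) : 0 < wplus A R S :=
  div_pos (by linarith [(abs_lt.mp (abs_lt_half_lam (A := A) hR hS)).1]) hS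

lemma wminus_neg (hR : 0 < R) (hS : 0 < S) : wminus A R S < 0 :=
  div_neg_of_neg_of_pos (by linarith [(abs_lt.mp (abs_lt_half_lam (A := A) hR hS)).2]) hS

lemma exp_neg_lam_mul_lt_one (hR : 0 < R) (hS : 0 < S) {t : ℝ} (ht : 0 < t) :
    Real.exp (-(lam A R S) * t) < 1 := by
  have hlam : 0 < lam A R S := by linarith [abs_nonneg A, abs_lt_half_lam (A := A) hR hS]
  exact Real.exp_lt_one_iff.mpr (by nlinarith)

end Riccati

theorem riccati_flow_concave (A R S : ℝ) (hR : 0 < R) (hS : 0 < S)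
    (t : ℝ) (ht : 0 < t) :
    (∀ x : ℝ, 0 ≤ x →
        vpi A R S ^ 2 / wminus A R S * Real.exp (-(lam A R S) * t) ≤
            (1 / 2) * iteratedDeriv 2 (fun y => phi A R S t y) x ∧
          (1 / 2) * iteratedDeriv 2 (fun y => phi A R S t y) x < 0) ∧
      ConcaveOn ℝ (Set.Ici (0 : ℝ)) (fun y => phi A R S t y) := by
  have hp : 0 < wplus A R S := wplus_pos hR hS
  have hm : wminus A R S < 0 := wminus_neg hR hS
  have hE1 : Real.exp (-(lam A R S) * t) < 1 := exp_neg_lam_mul_lt_one hR hS ht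
  have hE0 := Real.exp_pos (-(lam A R S) * t)
  set p := wplus A R S
  set m := wminus A R S
  set E := Real.exp (-(lam A R S) * t)
  have hk : 0 < 1 - E := sub_pos.mpr hE1
  have hpm : 0 < p - m := by linarith
  have hphi : ∀ y, (1 - E) * y + (p * E - m) ≠ 0 → phi A R S t y =
      (p + (p - m) * E / (1 - E)) - ((p - m) ^ 2 * E / (1 - E)) / ((1 - E) * y + (p * E - m)) :=
    fun y hy => mobius_eq_const_sub_div hE1.ne hy
  have hden : ∀ x ∈ Ici (0 : ℝ), 0 < (1 - E) * x + (p * E - m) := fun x hx => by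
    nlinarith [mul_nonneg hk.le (mem_Ici.mp hx)]
  refine ⟨fun x hx => ?_,
    concaveOn_of_eq_const_sub_div_affine (convex_Ici 0) hphi (by positivity) hden⟩
  have hD := hden x hx
  have hhalf : 1 / 2 * iteratedDeriv 2 (fun y => phi A R S t y) x =
      -((p - m) ^ 2 * E * (1 - E) / ((1 - E) * x + (p * E - m)) ^ 3) := by
    rw [iteratedDeriv_two_of_eq_const_sub_div_affine hphi hD.ne']
    field_simp
  rw [hhalf]
  exact ⟨sq_one_sub_div_div_mul_le hp hm hE0 hE1 hx, neg_neg_of_pos (by positivity)⟩
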